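/- arXiv:1203.3739 — 4 statements merged into one kernel-verified Lean document; each statement's English description precedes it below -/
import Mathlib

section
/- For every real number α with 0 < α < 2, the function z ↦ |z|^{-2-α} · (arg(1+z))² is integrable on ℂ with respect to two-dimensional Lebesgue measure; that is, ∫_ℂ |z|^{-2-α} |φ(1+z)|² dz < ∞, where φ(w) = arg(w) denotes the principal argument of a nonzero complex number w, valued in (-π, π]. -/
/-!
Near `z = 0` we have `arg (1 + z) = Im (log (1 + z)) = O(‖z‖)`, so the integrand is
`O(‖z‖ ^ (-α))`, which is integrable near the origin of the plane because `α < 2`. Away from the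
origin `arg` is bounded by `π`, and `‖z‖ ^ (-(2 + α))` is integrable at infinity because
`2 + α > 2`. Both radial integrability facts reduce to one-dimensional ones in polar coordinates.
-/

open MeasureTheory Complex Set Metric

theorem integrableOn_compl_closedBall_of_norm_le_rpow {E F : Type*} [NormedAddCommGroup E]
    [NormedSpace ℝ E] [FiniteDimensional ℝ E] [Nontrivial E] [MeasurableSpace E] [BorelSpace E]
    [NormedAddCommGroup F] {μ : Measure E} [μ.IsAddHaarMeasure] {f : E → F} {C β r : ℝ}
    (hr : 0 < r) (hβ : Module.finrank ℝ E < β)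
    (h_decay : ∀ᵐ x ∂μ.restrict (closedBall 0 r)ᶜ, ‖f x‖ ≤ C * ‖x‖ ^ (-β))
    (h_meas : AEStronglyMeasurable f μ) :
    IntegrableOn f (closedBall 0 r)ᶜ μ := by
  have h_radial : IntegrableOn (fun y : ℝ ↦ y ^ (Module.finrank ℝ E - 1) •
      (Ioi r).indicator (fun y ↦ C * y ^ (-β)) y) (Ioi 0) := by
    have h_rpow : IntegrableOn (fun y : ℝ ↦ C * y ^ ((Module.finrank ℝ E : ℝ) - 1 - β)) (Ioi r) :=
      (integrableOn_Ioi_rpow_of_lt (by linarith) hr).const_mul C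
    refine (integrable_indicator_iff measurableSet_Ioi |>.2 h_rpow).integrableOn.congr_fun
      (fun y (hy : 0 < y) ↦ ?_) measurableSet_Ioi
    by_cases hyr : y ∈ Ioi r
    · simp only [indicator_of_mem hyr, smul_eq_mul]
      rw [← Real.rpow_natCast, mul_left_comm, ← Real.rpow_add hy]
      congr 2
      have : 1 ≤ Module.finrank ℝ E := Module.finrank_pos
      push_cast [this]
      ring
    · simp [indicator_of_notMem hyr]
  have h_model : IntegrableOn (fun x : E ↦ C * ‖x‖ ^ (-β)) (closedBall 0 r)ᶜ μ := by
    refine ((integrable_fun_norm_addHaar μ).2 h_radial).integrableOn.congr_fun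
      (fun x hx ↦ ?_) measurableSet_closedBall.compl
    simp only [mem_compl_iff, mem_closedBall, dist_zero_right, not_le] at hx
    simp [indicator_of_mem (show ‖x‖ ∈ Ioi r from hx)]
  exact h_model.mono' h_meas.restrict h_decay

theorem abs_arg_one_add_le {z : ℂ} (hz : ‖z‖ ≤ 1 / 2) : |arg (1 + z)| ≤ 3 / 2 * ‖z‖ := by
  rw [← log_im]
  exact (abs_im_le_norm _).trans (norm_log_one_add_half_le_self hz)

theorem rpow_neg_two_sub_mul_arg_one_add_sq_le {α : ℝ} {z : ℂ} (hz : ‖z‖ ≤ 1 / 2) :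
    ‖z‖ ^ (-2 - α) * arg (1 + z) ^ 2 ≤ 9 / 4 * ‖z‖ ^ (-α) := by
  rcases eq_or_ne z 0 with rfl | hz0
  · simpa using Real.rpow_nonneg le_rfl (-α)
  have hz_pos : 0 < ‖z‖ := norm_pos_iff.2 hz0
  have h_arg : arg (1 + z) ^ 2 ≤ (3 / 2 * ‖z‖) ^ 2 :=
    sq_le_sq.2 ((abs_arg_one_add_le hz).trans (le_abs_self _))
  calc ‖z‖ ^ (-2 - α) * arg (1 + z) ^ 2
      ≤ ‖z‖ ^ (-α) / ‖z‖ ^ 2 * (3 / 2 * ‖z‖) ^ 2 := by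
        rw [show -2 - α = -α - (2 : ℕ) by push_cast; ring, Real.rpow_sub_natCast hz_pos.ne']
        gcongr
    _ = 9 / 4 * ‖z‖ ^ (-α) := by field_simp; ring

/-- For `0 < α < 2`, the function `z ↦ |z|^(-2-α) · (arg(1+z))²` is integrable on `ℂ`
with respect to two-dimensional Lebesgue measure. -/
theorem stmt1 (α : ℝ) (hα : 0 < α) (hα2 : α < 2) :
    Integrable (fun z : ℂ => ‖z‖ ^ (-2 - α) * (Complex.arg (1 + z)) ^ 2)
      volume := by
  have h_meas : AEStronglyMeasurable (fun z : ℂ => ‖z‖ ^ (-2 - α) * arg (1 + z) ^ 2) volume := by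
    fun_prop
  have h_cover : ball (0 : ℂ) (1 / 2) ∪ (closedBall 0 (1 / 4))ᶜ = univ := by
    refine eq_univ_of_forall fun z ↦ ?_
    simp only [mem_union, mem_compl_iff, mem_ball_zero_iff, mem_closedBall_zero_iff]
    by_contra! h
    linarith [h.1, h.2]
  have h_near : IntegrableOn (fun z : ℂ => ‖z‖ ^ (-2 - α) * arg (1 + z) ^ 2) (ball 0 (1 / 2)) := by
    refine integrableOn_ball_of_norm_le_rpow (C := 9 / 4) (by simp) (by simpa using hα2) ?_ h_meas
    refine (ae_restrict_iff' measurableSet_ball).2 (.of_forall fun z hz ↦ ?_)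
    rw [mem_ball_zero_iff] at hz
    rw [Real.norm_of_nonneg (by positivity)]
    exact rpow_neg_two_sub_mul_arg_one_add_sq_le hz.le
  have h_far : IntegrableOn (fun z : ℂ => ‖z‖ ^ (-2 - α) * arg (1 + z) ^ 2)
      (closedBall 0 (1 / 4))ᶜ := by
    refine integrableOn_compl_closedBall_of_norm_le_rpow (C := Real.pi ^ 2) (β := 2 + α)
      (by norm_num) (by rw [finrank_real_complex]; push_cast; linarith) (.of_forall fun z ↦ ?_) h_meas
    rw [Real.norm_of_nonneg (by positivity), neg_add', mul_comm]
    exact mul_le_mul_of_nonneg_right (sq_le_sq' (neg_pi_lt_arg _).le (arg_le_pi _)) (by positivity)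
  rw [← integrableOn_univ, ← h_cover]
  exact h_near.union h_far
end

section
/- Let α be a real number with 0 < α < 2 and let φ be a real number with 0 < φ < π. Then ∫₀^∞ r · (1 + r² - 2r·cos φ)^{-(1+α/2)} dr = 1/α + cos φ · (sin φ)^{-1-α} · ∫_{-cos φ / sin φ}^{∞} (1 + u²)^{-(1+α/2)} du. (Note that 1 + r² - 2r·cos φ = (r - cos φ)² + sin²φ > 0 for all r when 0 < φ < π, so the integrand is well defined.) -/
/-!
Completing the square, `1 + r² - 2 r cos φ = (r - cos φ)² + sin² φ`, and substituting
`r = cos φ + u sin φ` turn the integrand into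
`sin φ ^ (-2-α) * (sin φ * u (1 + u²)^(-(1+α/2)) + cos φ * (1 + u²)^(-(1+α/2)))`.
The first summand has the explicit antiderivative `-(1/α) (1 + u²)^(-α/2)`, and at the lower
limit `u = -cos φ / sin φ` we have `1 + u² = sin φ ^ (-2)`, which produces the term `1/α`.
-/

open MeasureTheory Real Set Filter Topology

section ChangeOfVariables

variable {E : Type*} [NormedAddCommGroup E] [NormedSpace ℝ E]

theorem integral_Ioi_comp_add_right (g : ℝ → E) (a c : ℝ) :
    ∫ x in Ioi a, g (x + c) = ∫ x in Ioi (a + c), g x := by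
  simpa [preimage_add_const_Ioi] using
    (measurePreserving_add_right volume c).setIntegral_preimage_emb
      (measurableEmbedding_addRight c) g (Ioi (a + c))

theorem integral_Ioi_comp_mul_add (g : ℝ → E) (a c : ℝ) {s : ℝ} (hs : 0 < s) :
    ∫ x in Ioi a, g (s * x + c) = s⁻¹ • ∫ x in Ioi (s * a + c), g x := by
  rw [integral_comp_mul_left_Ioi (fun x => g (x + c)) a hs, integral_Ioi_comp_add_right]

end ChangeOfVariables

theorem integrable_one_add_sq_rpow {α : ℝ} (hα : 0 < α) :
    Integrable fun u : ℝ => (1 + u ^ 2) ^ (-(1 + α / 2)) := by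
  have := integrable_rpow_neg_one_add_norm_sq (E := ℝ) (μ := volume) (r := 2 + α)
    (by rw [Module.finrank_self, Nat.cast_one]; linarith)
  convert this using 2 with u
  rw [norm_eq_abs, sq_abs]
  ring_nf

theorem abs_mul_one_add_sq_rpow_le (α u : ℝ) :
    |u * (1 + u ^ 2) ^ (-(1 + α / 2))| ≤ (1 + u ^ 2) ^ (-(1 + α) / 2) := by
  have hpos : 0 < 1 + u ^ 2 := by positivity
  have habs : |u| ≤ (1 + u ^ 2) ^ (1 / 2 : ℝ) := by
    rw [← sqrt_eq_rpow, ← sqrt_sq_eq_abs]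
    exact sqrt_le_sqrt (by linarith)
  calc |u * (1 + u ^ 2) ^ (-(1 + α / 2))| = |u| * (1 + u ^ 2) ^ (-(1 + α / 2)) := by
        rw [abs_mul, abs_of_pos (rpow_pos_of_pos hpos _)]
    _ ≤ (1 + u ^ 2) ^ (1 / 2 : ℝ) * (1 + u ^ 2) ^ (-(1 + α / 2)) := by gcongr
    _ = (1 + u ^ 2) ^ (-(1 + α) / 2) := by rw [← rpow_add hpos]; ring_nf

theorem integrable_mul_one_add_sq_rpow {α : ℝ} (hα : 0 < α) :
    Integrable fun u : ℝ => u * (1 + u ^ 2) ^ (-(1 + α / 2)) := by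
  have := integrable_rpow_neg_one_add_norm_sq (E := ℝ) (μ := volume) (r := 1 + α)
    (by rw [Module.finrank_self, Nat.cast_one]; linarith)
  refine this.mono' (by fun_prop) (.of_forall fun u => ?_)
  simpa [sq_abs] using abs_mul_one_add_sq_rpow_le α u

theorem hasDerivAt_one_add_sq_rpow {α : ℝ} (hα : α ≠ 0) (u : ℝ) :
    HasDerivAt (fun u : ℝ => -α⁻¹ * (1 + u ^ 2) ^ (-(α / 2)))
      (u * (1 + u ^ 2) ^ (-(1 + α / 2))) u := by
  have hbase : HasDerivAt (fun u : ℝ => 1 + u ^ 2) (2 * u) u := by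
    simpa using (hasDerivAt_pow 2 u).const_add 1
  refine ((hbase.rpow_const (p := -(α / 2)) (.inl (by positivity))).const_mul
    (-α⁻¹)).congr_deriv ?_
  rw [show -(α / 2) - 1 = -(1 + α / 2) by ring]
  field_simp

theorem tendsto_one_add_sq_rpow_atTop {α : ℝ} (hα : 0 < α) :
    Tendsto (fun u : ℝ => -α⁻¹ * (1 + u ^ 2) ^ (-(α / 2))) atTop (𝓝 0) := by
  have hbase : Tendsto (fun u : ℝ => 1 + u ^ 2) atTop atTop :=
    tendsto_atTop_add_const_left _ 1 (tendsto_pow_atTop two_ne_zero)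
  simpa using ((tendsto_rpow_neg_atTop (by positivity)).comp hbase).const_mul (-α⁻¹)

theorem integral_Ioi_mul_one_add_sq_rpow {α : ℝ} (hα : 0 < α) (x : ℝ) :
    ∫ u in Ioi x, u * (1 + u ^ 2) ^ (-(1 + α / 2)) = α⁻¹ * (1 + x ^ 2) ^ (-(α / 2)) := by
  rw [integral_Ioi_of_hasDerivAt_of_tendsto
    (hasDerivAt_one_add_sq_rpow hα.ne' x).continuousAt.continuousWithinAt
    (fun u _ => hasDerivAt_one_add_sq_rpow hα.ne' u)
    (integrable_mul_one_add_sq_rpow hα).integrableOn (tendsto_one_add_sq_rpow_atTop hα)]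
  ring

theorem mul_sq_add_sq_rpow {s : ℝ} (hs : 0 < s) (α u : ℝ) :
    ((s * u) ^ 2 + s ^ 2) ^ (-(1 + α / 2)) = s ^ (-2 - α) * (1 + u ^ 2) ^ (-(1 + α / 2)) := by
  rw [show (s * u) ^ 2 + s ^ 2 = s ^ 2 * (1 + u ^ 2) by ring,
    mul_rpow (by positivity) (by positivity), ← rpow_natCast, ← rpow_mul hs.le]
  congr 2
  push_cast
  ring

theorem integral_Ioi_zero_mul_sq_add_sq_rpow {α : ℝ} (hα : 0 < α) (c : ℝ) {s : ℝ}
    (hs : 0 < s) :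
    ∫ r in Ioi 0, r * ((r - c) ^ 2 + s ^ 2) ^ (-(1 + α / 2)) =
      α⁻¹ * (c ^ 2 + s ^ 2) ^ (-(α / 2)) +
        c * s ^ (-1 - α) * ∫ u in Ioi (-c / s), (1 + u ^ 2) ^ (-(1 + α / 2)) := by
  have hintegrand : ∀ u, (s * u + c) * ((s * u + c - c) ^ 2 + s ^ 2) ^ (-(1 + α / 2)) =
      s ^ (-2 - α) * (s * (u * (1 + u ^ 2) ^ (-(1 + α / 2))) +
        c * (1 + u ^ 2) ^ (-(1 + α / 2))) := fun u => by
    rw [add_sub_cancel_right, mul_sq_add_sq_rpow hs]; ring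
  have hsubst := integral_Ioi_comp_mul_add
    (fun r => r * ((r - c) ^ 2 + s ^ 2) ^ (-(1 + α / 2))) (-c / s) c hs
  simp only [hintegrand, mul_div_cancel₀ _ hs.ne', neg_add_cancel, smul_eq_mul] at hsubst
  rw [integral_const_mul,
    integral_add ((integrable_mul_one_add_sq_rpow hα).const_mul s).integrableOn
      ((integrable_one_add_sq_rpow hα).const_mul c).integrableOn,
    integral_const_mul, integral_const_mul, integral_Ioi_mul_one_add_sq_rpow hα] at hsubst
  have hscale : (c ^ 2 + s ^ 2) ^ (-(α / 2)) = s ^ (-α) * (1 + (-c / s) ^ 2) ^ (-(α / 2)) := by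
    rw [show c ^ 2 + s ^ 2 = s ^ 2 * (1 + (-c / s) ^ 2) by field_simp; ring,
      mul_rpow (by positivity) (by positivity), ← rpow_natCast, ← rpow_mul hs.le]
    congr 2
    push_cast
    ring
  rw [eq_comm, inv_mul_eq_iff_eq_mul₀ hs.ne'] at hsubst
  rw [hsubst, hscale, show -2 - α = -α - 1 - 1 by ring, show -1 - α = -α - 1 by ring,
    rpow_sub_one hs.ne', rpow_sub_one hs.ne']
  field_simp

theorem stmt2_general (α φ : ℝ) (hα : 0 < α) (hφ : 0 < φ) (hφπ : φ < π) :
    ∫ r in Set.Ioi (0 : ℝ), r * (1 + r ^ 2 - 2 * r * Real.cos φ) ^ (-(1 + α / 2)) =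
      1 / α + Real.cos φ * Real.sin φ ^ (-1 - α) *
        ∫ u in Set.Ioi (-Real.cos φ / Real.sin φ), (1 + u ^ 2) ^ (-(1 + α / 2)) := by
  have hcomplete : ∀ r, 1 + r ^ 2 - 2 * r * cos φ = (r - cos φ) ^ 2 + sin φ ^ 2 := fun r => by
    linear_combination -sin_sq_add_cos_sq φ
  simp only [hcomplete]
  rw [integral_Ioi_zero_mul_sq_add_sq_rpow hα (cos φ) (sin_pos_of_pos_of_lt_pi hφ hφπ),
    cos_sq_add_sin_sq, one_rpow, mul_one, one_div]

/-- For `0 < α < 2` and `0 < φ < π`,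
`∫₀^∞ r (1 + r² - 2r cos φ)^(-(1+α/2)) dr
  = 1/α + cos φ · (sin φ)^(-1-α) · ∫_{-cos φ/sin φ}^∞ (1+u²)^(-(1+α/2)) du`. -/
theorem stmt2 (α φ : ℝ) (hα : 0 < α) (hα2 : α < 2) (hφ : 0 < φ) (hφπ : φ < π) :
    ∫ r in Set.Ioi (0 : ℝ), r * (1 + r ^ 2 - 2 * r * Real.cos φ) ^ (-(1 + α / 2)) =
      1 / α + Real.cos φ * Real.sin φ ^ (-1 - α) *
        ∫ u in Set.Ioi (-Real.cos φ / Real.sin φ), (1 + u ^ 2) ^ (-(1 + α / 2)) :=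
  stmt2_general α φ hα hφ hφπ
end

section
/- Let α be a real number with 0 < α < 2 and define g(φ) = ∫₀^∞ r · (1 + r² - 2r·cos φ)^{-(1+α/2)} dr for 0 < φ < π. Then lim_{a → 0⁺} a^α · ∫_a^π g(φ) dφ = √π · Γ((1+α)/2) / (α · Γ(1+α/2)), where Γ denotes the Gamma function. -/
/-!
Since `1 + r² - 2r cos φ = (r - cos φ)² + sin² φ`, the radial integral is elementary up to
the tail `K(x) = ∫_x^∞ (1 + v²)^(-(1+α/2)) dv` (`tailOneAddSq`): one finds
`g φ = 1/α + cos φ · sin φ^(-(1+α)) · K(-cot φ)`, and this is `-H'` for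
`H a = sin a^(-α) · K(-cot a) / α` (`levyTail`). As `H` vanishes at `π`, `∫_a^π g = H a`.
When `a → 0⁺`, `(a / sin a)^α → 1` and `K(-cot a) → ∫_ℝ (1 + v²)^(-(1+α/2))`, which the
Gaussian–Gamma identity `Γ(p) (1 + v²)^(-p) = ∫₀^∞ t^(p-1) e^(-(1+v²)t) dt` and Fubini
evaluate to `√π Γ((1+α)/2) / Γ(1+α/2)`.
-/

open MeasureTheory Real Set Filter
open scoped Topology

section Tail

variable {f : ℝ → ℝ}

theorem setIntegral_Ioi_eq_sub_intervalIntegral (hf : Integrable f) (x : ℝ) :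
    ∫ v in Ioi x, f v = (∫ v in Ioi 0, f v) - ∫ v in (0 : ℝ)..x, f v := by
  rw [← intervalIntegral.integral_Ioi_sub_Ioi' hf.integrableOn hf.integrableOn, sub_sub_cancel]

theorem hasDerivAt_setIntegral_Ioi (hf : Integrable f) (hc : Continuous f) (x : ℝ) :
    HasDerivAt (fun y => ∫ v in Ioi y, f v) (-f x) x := by
  rw [funext (setIntegral_Ioi_eq_sub_intervalIntegral hf)]
  exact (intervalIntegral.integral_hasDerivAt_right hf.intervalIntegrable
    (hc.stronglyMeasurableAtFilter _ _) hc.continuousAt).const_sub _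

theorem tendsto_setIntegral_Ioi_atTop (hf : Integrable f) :
    Tendsto (fun x => ∫ v in Ioi x, f v) atTop (𝓝 0) := by
  rw [funext (setIntegral_Ioi_eq_sub_intervalIntegral hf)]
  simpa using (tendsto_const_nhds (x := ∫ v in Ioi 0, f v)).sub
    (intervalIntegral_tendsto_integral_Ioi 0 hf.integrableOn tendsto_id)

theorem tendsto_setIntegral_Ioi_atBot (hf : Integrable f) :
    Tendsto (fun x => ∫ v in Ioi x, f v) atBot (𝓝 (∫ v, f v)) := by
  rw [funext (setIntegral_Ioi_eq_sub_intervalIntegral hf)]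
  simp_rw [fun x : ℝ => intervalIntegral.integral_symm (f := f) (μ := volume) x 0,
    sub_neg_eq_add]
  rw [← intervalIntegral.integral_Iic_add_Ioi hf.integrableOn hf.integrableOn, add_comm]
  exact tendsto_const_nhds.add
    (intervalIntegral_tendsto_integral_Iic 0 hf.integrableOn tendsto_id)

end Tail

theorem integrable_one_add_sq_rpow_neg {p : ℝ} (hp : 1 / 2 < p) :
    Integrable fun v : ℝ => (1 + v ^ 2) ^ (-p) := by
  have h := integrable_rpow_neg_one_add_norm_sq (E := ℝ) (μ := volume) (r := 2 * p)
    (by simp; linarith)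
  simpa [mul_div_cancel_left₀ p two_ne_zero, neg_div] using h

theorem continuous_one_add_sq_rpow_neg (p : ℝ) : Continuous fun v : ℝ => (1 + v ^ 2) ^ (-p) :=
  (by fun_prop : Continuous fun v : ℝ => 1 + v ^ 2).rpow_const fun _ => Or.inl (by positivity)

noncomputable def tailOneAddSq (p x : ℝ) : ℝ := ∫ v in Ioi x, (1 + v ^ 2) ^ (-p)

theorem tailOneAddSq_nonneg (p x : ℝ) : 0 ≤ tailOneAddSq p x :=
  setIntegral_nonneg measurableSet_Ioi fun v _ => by positivity

section tailOneAddSq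

variable {p : ℝ}

theorem hasDerivAt_tailOneAddSq (hp : 1 / 2 < p) (x : ℝ) :
    HasDerivAt (tailOneAddSq p) (-(1 + x ^ 2) ^ (-p)) x :=
  hasDerivAt_setIntegral_Ioi (integrable_one_add_sq_rpow_neg hp)
    (continuous_one_add_sq_rpow_neg p) x

theorem tendsto_tailOneAddSq_atTop (hp : 1 / 2 < p) :
    Tendsto (tailOneAddSq p) atTop (𝓝 0) :=
  tendsto_setIntegral_Ioi_atTop (integrable_one_add_sq_rpow_neg hp)

theorem tendsto_tailOneAddSq_atBot (hp : 1 / 2 < p) :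
    Tendsto (tailOneAddSq p) atBot (𝓝 (∫ v : ℝ, (1 + v ^ 2) ^ (-p))) :=
  tendsto_setIntegral_Ioi_atBot (integrable_one_add_sq_rpow_neg hp)

theorem tailOneAddSq_le (hp : 1 / 2 < p) {x : ℝ} (hx : 0 < x) :
    tailOneAddSq p x ≤ x ^ (1 - 2 * p) / (2 * p - 1) := by
  have h2p : -(2 * p) < -1 := by linarith
  calc tailOneAddSq p x ≤ ∫ v in Ioi x, v ^ (-(2 * p)) := by
        refine setIntegral_mono_on (integrable_one_add_sq_rpow_neg hp).integrableOn
          (integrableOn_Ioi_rpow_of_lt h2p hx) measurableSet_Ioi fun v hv => ?_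
        have hv0 : 0 < v := hx.trans hv
        rw [← mul_neg, rpow_mul hv0.le, rpow_two]
        exact rpow_le_rpow_of_nonpos (by positivity) (by linarith) (by linarith)
    _ = x ^ (1 - 2 * p) / (2 * p - 1) := by
        rw [integral_Ioi_rpow_of_lt h2p hx, neg_div, ← div_neg, neg_add', neg_neg,
          neg_add_eq_sub]

end tailOneAddSq

section GammaIdentity

variable {p : ℝ}

theorem one_add_sq_rpow_neg_mul_Gamma (hp : 0 < p) (v : ℝ) :
    (1 + v ^ 2) ^ (-p) * Gamma p = ∫ t in Ioi 0, t ^ (p - 1) * exp (-((1 + v ^ 2) * t)) := by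
  rw [integral_rpow_mul_exp_neg_mul_Ioi hp (by positivity), one_div, inv_rpow (by positivity),
    rpow_neg (by positivity)]

theorem integral_rpow_mul_exp_neg_one_add_sq_mul {t : ℝ} (ht : 0 < t) :
    ∫ v : ℝ, t ^ (p - 1) * exp (-((1 + v ^ 2) * t))
      = √π * (t ^ (p - 1 / 2 - 1) * exp (-t)) := by
  have hsplit : ∀ v : ℝ, t ^ (p - 1) * exp (-((1 + v ^ 2) * t))
      = t ^ (p - 1) * exp (-t) * exp (-t * v ^ 2) := fun v => by
    rw [mul_assoc, ← exp_add]; ring_nf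
  have hsqrt : √(π / t) = √π * t ^ (-(1 / 2) : ℝ) := by
    rw [sqrt_div' _ ht.le, sqrt_eq_rpow t, rpow_neg ht.le, div_eq_mul_inv]
  simp_rw [hsplit]
  rw [integral_const_mul, integral_gaussian, hsqrt,
    show p - 1 / 2 - 1 = (p - 1) + -(1 / 2) by ring, rpow_add ht]
  ring

theorem integral_one_add_sq_rpow_neg (hp : 1 / 2 < p) :
    ∫ v : ℝ, (1 + v ^ 2) ^ (-p) = √π * Gamma (p - 1 / 2) / Gamma p := by
  have hp0 : 0 < p := by linarith
  set F : ℝ → ℝ → ℝ := fun v t => t ^ (p - 1) * exp (-((1 + v ^ 2) * t))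
  have hnorm : ∀ t ∈ Ioi (0 : ℝ),
      ∫ v, ‖F v t‖ = √π * (t ^ (p - 1 / 2 - 1) * exp (-t)) := by
    intro t ht
    rw [← integral_rpow_mul_exp_neg_one_add_sq_mul ht]
    exact integral_congr_ae (Eventually.of_forall fun v =>
      norm_of_nonneg (by have : 0 < t := ht; positivity))
  have hint : Integrable (Function.uncurry F) (volume.prod (volume.restrict (Ioi 0))) := by
    refine (integrable_prod_iff' (by fun_prop)).2 ⟨?_, ?_⟩
    · filter_upwards [ae_restrict_mem measurableSet_Ioi] with t (ht : 0 < t)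
      have := (integrable_exp_neg_mul_sq ht).const_mul (t ^ (p - 1) * exp (-t))
      refine this.congr (Eventually.of_forall fun v => ?_)
      simp only [Function.uncurry_apply_pair, F, mul_assoc, ← exp_add]
      ring_nf
    · refine ((GammaIntegral_convergent (show 0 < p - 1 / 2 by linarith)).const_mul √π).congr ?_
      filter_upwards [ae_restrict_mem measurableSet_Ioi] with t ht
      simp only [Function.uncurry_apply_pair, hnorm t ht, mul_comm (exp _)]
  have hswap := integral_integral_swap hint
  rw [setIntegral_congr_fun measurableSet_Ioi fun t ht =>
    integral_rpow_mul_exp_neg_one_add_sq_mul ht, integral_const_mul] at hswap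
  simp_rw [F, ← one_add_sq_rpow_neg_mul_Gamma hp0, integral_mul_const] at hswap
  rw [eq_div_iff (Gamma_pos_of_pos hp0).ne', hswap, Gamma_eq_integral (by linarith)]
  simp_rw [mul_comm (exp _)]

end GammaIdentity

theorem one_add_div_sq_rpow_neg (y : ℝ) {s : ℝ} (hs : 0 < s) (p : ℝ) :
    (1 + (y / s) ^ 2) ^ (-p) = s ^ (2 * p) * (y ^ 2 + s ^ 2) ^ (-p) := by
  rw [show 1 + (y / s) ^ 2 = (s ^ 2)⁻¹ * (y ^ 2 + s ^ 2) by field_simp; ring,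
    mul_rpow (by positivity) (by positivity), inv_rpow (by positivity),
    ← rpow_neg (by positivity), ← rpow_two, ← rpow_mul hs.le]
  ring_nf

theorem integral_Ioi_mul_sq_add_sq_rpow_neg {p : ℝ} (hp : 1 < p) (c : ℝ) {s : ℝ}
    (hs : 0 < s) :
    ∫ r in Ioi 0, r * ((r - c) ^ 2 + s ^ 2) ^ (-p)
      = (c ^ 2 + s ^ 2) ^ (1 - p) / (2 * (p - 1))
        + c * s ^ (1 - 2 * p) * tailOneAddSq p (-(c / s)) := by
  let F : ℝ → ℝ := fun r => -(((r - c) ^ 2 + s ^ 2) ^ (1 - p) / (2 * (p - 1))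
    + c * s ^ (1 - 2 * p) * tailOneAddSq p ((r - c) / s))
  have hderiv : ∀ r ∈ Ici (0 : ℝ), HasDerivAt F (r * ((r - c) ^ 2 + s ^ 2) ^ (-p)) r := by
    intro r _
    have hq : 0 < (r - c) ^ 2 + s ^ 2 := by positivity
    have h1 : HasDerivAt (fun r => (r - c) ^ 2 + s ^ 2) (2 * (r - c)) r := by
      simpa using (((hasDerivAt_id r).sub_const c).pow 2).add_const (s ^ 2)
    have h2 : HasDerivAt (fun r => (r - c) / s) (1 / s) r := by
      simpa using ((hasDerivAt_id r).sub_const c).div_const s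
    have h3 := (hasDerivAt_tailOneAddSq (p := p) (by linarith) _).comp r h2
    refine (((h1.rpow_const (p := 1 - p) (Or.inl hq.ne')).div_const (2 * (p - 1))).add
      (h3.const_mul (c * s ^ (1 - 2 * p)))).neg.congr_deriv ?_
    rw [one_add_div_sq_rpow_neg _ hs, show 1 - p - 1 = -p by ring]
    have hs' : s ^ (1 - 2 * p) * s ^ (2 * p) * (1 / s) = 1 := by
      rw [← rpow_add hs, sub_add_cancel, rpow_one, mul_one_div_cancel hs.ne']
    have hp' : 2 * (r - c) * (1 - p) / (2 * (p - 1)) = -(r - c) := by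
      field_simp [show p - 1 ≠ 0 by linarith]; ring
    rw [mul_div_right_comm, hp']
    linear_combination c * ((r - c) ^ 2 + s ^ 2) ^ (-p) * hs'
  have hlim : Tendsto F atTop (𝓝 0) := by
    have hshift : Tendsto (fun r : ℝ => r - c) atTop atTop :=
      tendsto_atTop_add_const_right atTop (-c) tendsto_id
    have hq : Tendsto (fun r : ℝ => (r - c) ^ 2 + s ^ 2) atTop atTop :=
      tendsto_atTop_add_const_right _ _ ((tendsto_pow_atTop two_ne_zero).comp hshift)
    have hpow : Tendsto (fun r : ℝ => ((r - c) ^ 2 + s ^ 2) ^ (1 - p)) atTop (𝓝 0) := by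
      have := (tendsto_rpow_neg_atTop (show 0 < p - 1 by linarith)).comp hq
      rwa [neg_sub] at this
    have htail := (tendsto_tailOneAddSq_atTop (p := p) (by linarith)).comp
      (hshift.atTop_div_const hs)
    have := ((hpow.div_const (2 * (p - 1))).add (htail.const_mul (c * s ^ (1 - 2 * p)))).neg
    rwa [zero_div, mul_zero, add_zero, neg_zero] at this
  rw [integral_Ioi_of_hasDerivAt_of_nonneg' hderiv
    (fun r (hr : 0 < r) => mul_nonneg hr.le (by positivity)) hlim]
  simp [F, neg_div]

noncomputable def windingDensity (α φ : ℝ) : ℝ :=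
  ∫ r in Ioi 0, r * (1 + r ^ 2 - 2 * r * cos φ) ^ (-(1 + α / 2))

noncomputable def levyTail (α a : ℝ) : ℝ :=
  sin a ^ (-α) * tailOneAddSq (1 + α / 2) (-(cos a / sin a)) / α

theorem windingDensity_nonneg (α φ : ℝ) : 0 ≤ windingDensity α φ := by
  refine setIntegral_nonneg measurableSet_Ioi fun r (hr : 0 < r) => mul_nonneg hr.le ?_
  exact rpow_nonneg (by nlinarith [cos_le_one φ, sq_nonneg (r - 1)]) _

section Winding

variable {α : ℝ}

theorem windingDensity_eq (hα : 0 < α) {φ : ℝ} (hφ : φ ∈ Ioo 0 π) :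
    windingDensity α φ
      = 1 / α
        + cos φ * sin φ ^ (-(1 + α)) * tailOneAddSq (1 + α / 2) (-(cos φ / sin φ)) := by
  have hsin : 0 < sin φ := sin_pos_of_pos_of_lt_pi hφ.1 hφ.2
  have hbase : ∀ r, 1 + r ^ 2 - 2 * r * cos φ = (r - cos φ) ^ 2 + sin φ ^ 2 := fun r => by
    linear_combination -sin_sq_add_cos_sq φ
  simp_rw [windingDensity, hbase]
  rw [integral_Ioi_mul_sq_add_sq_rpow_neg (by linarith) _ hsin, cos_sq_add_sin_sq, one_rpow,
    show 2 * (1 + α / 2 - 1) = α by ring, show 1 - 2 * (1 + α / 2) = -(1 + α) by ring,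
    mul_assoc]

theorem hasDerivAt_levyTail (hα : 0 < α) {x : ℝ} (hx : x ∈ Ioo 0 π) :
    HasDerivAt (levyTail α) (-windingDensity α x) x := by
  have hsin : 0 < sin x := sin_pos_of_pos_of_lt_pi hx.1 hx.2
  have hpow : HasDerivAt (fun a => sin a ^ (-α)) (cos x * (-α) * sin x ^ (-α - 1)) x :=
    (hasDerivAt_sin x).rpow_const (Or.inl hsin.ne')
  have hcot : HasDerivAt (fun a => -(cos a / sin a)) (sin x ^ (-2 : ℝ)) x := by
    refine ((hasDerivAt_cos x).div (hasDerivAt_sin x) hsin.ne').neg.congr_deriv ?_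
    rw [rpow_neg hsin.le, rpow_two]
    field_simp
    linear_combination sin_sq_add_cos_sq x
  refine ((hpow.mul ((hasDerivAt_tailOneAddSq (by linarith) _).comp x hcot)).div_const α
    ).congr_deriv ?_
  have hkernel :
      (1 + (-(cos x / sin x)) ^ 2) ^ (-(1 + α / 2)) * sin x ^ (-2 : ℝ) = sin x ^ α := by
    rw [← neg_div, one_add_div_sq_rpow_neg _ hsin, neg_sq, cos_sq_add_sin_sq, one_rpow, mul_one,
      ← rpow_add hsin]
    ring_nf
  have hcancel : sin x ^ (-α) * sin x ^ α = 1 := by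
    rw [← rpow_add hsin, neg_add_cancel, rpow_zero]
  rw [windingDensity_eq hα hx, show -α - 1 = -(1 + α) by ring, Function.comp_apply, neg_mul,
    mul_neg, hkernel, mul_neg, hcancel]
  field_simp
  ring

-- `sin π = 0` and `0 ^ (-α) = 0` in `Real.rpow`; this junk value is also the limit at `π`.
theorem levyTail_pi (hα : α ≠ 0) : levyTail α π = 0 := by
  simp [levyTail, zero_rpow (neg_ne_zero.2 hα)]

theorem levyTail_le (hα : 0 < α) {b : ℝ} (hb : b ∈ Ioo (π / 2) π) :
    levyTail α b ≤ sin b * (-cos b) ^ (-(1 + α)) / ((1 + α) * α) := by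
  have hsin : 0 < sin b := sin_pos_of_pos_of_lt_pi (by linarith [hb.1, pi_pos]) hb.2
  have hcos : 0 < -cos b :=
    neg_pos.2 (cos_neg_of_pi_div_two_lt_of_lt hb.1 (by linarith [hb.2, pi_pos]))
  have hcot : -(cos b / sin b) = -cos b / sin b := (neg_div _ _).symm
  have htail := tailOneAddSq_le (p := 1 + α / 2) (by linarith) (x := -(cos b / sin b))
    (by rw [hcot]; positivity)
  rw [hcot, div_rpow hcos.le hsin.le, show 1 - 2 * (1 + α / 2) = -(1 + α) by ring,
    show 2 * (1 + α / 2) - 1 = 1 + α by ring] at htail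
  calc levyTail α b
      ≤ sin b ^ (-α) * ((-cos b) ^ (-(1 + α)) / sin b ^ (-(1 + α)) / (1 + α)) / α := by
        rw [levyTail, hcot]; gcongr
    _ = sin b * (-cos b) ^ (-(1 + α)) / ((1 + α) * α) := by
        rw [rpow_neg hsin.le (1 + α), rpow_add hsin, rpow_one, rpow_neg hsin.le]
        field_simp

theorem tendsto_levyTail_nhdsLT_pi (hα : 0 < α) :
    Tendsto (levyTail α) (𝓝[<] π) (𝓝 0) := by
  have hbound : Tendsto (fun b => sin b * (-cos b) ^ (-(1 + α)) / ((1 + α) * α))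
      (𝓝[<] π) (𝓝 0) := by
    have : ContinuousAt (fun b => sin b * (-cos b) ^ (-(1 + α)) / ((1 + α) * α)) π :=
      (continuous_sin.continuousAt.mul
        (continuous_cos.continuousAt.neg.rpow_const (Or.inl (by simp)))).div_const _
    simpa using this.tendsto.mono_left nhdsWithin_le_nhds
  have hmem : Ioo (π / 2) π ∈ 𝓝[<] π := Ioo_mem_nhdsLT (by linarith [pi_pos])
  refine tendsto_of_tendsto_of_tendsto_of_le_of_le' tendsto_const_nhds hbound ?_ ?_
  · filter_upwards [hmem] with b hb
    have hsin : 0 ≤ sin b := sin_nonneg_of_nonneg_of_le_pi (by linarith [hb.1, pi_pos]) hb.2.le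
    unfold levyTail
    have := tailOneAddSq_nonneg (1 + α / 2) (-(cos b / sin b))
    positivity
  · filter_upwards [hmem] with b hb using levyTail_le hα hb

theorem continuousOn_levyTail (hα : 0 < α) {a : ℝ} (ha : 0 < a) :
    ContinuousOn (levyTail α) (Icc a π) := by
  intro x hx
  rcases hx.2.eq_or_lt with hxπ | hlt
  · have : ContinuousWithinAt (levyTail α) (Iio π) π := by
      rw [ContinuousWithinAt, levyTail_pi hα.ne']
      exact tendsto_levyTail_nhdsLT_pi hα
    rw [hxπ]
    exact (continuousWithinAt_Iio_iff_Iic.1 this).mono fun y (hy : y ∈ Icc a π) => hy.2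
  · exact (hasDerivAt_levyTail hα ⟨ha.trans_le hx.1, hlt⟩).continuousAt.continuousWithinAt

theorem integral_eq_levyTail (hα : 0 < α) {g : ℝ → ℝ}
    (hg : ∀ φ ∈ Ioo 0 π, g φ = windingDensity α φ) {a : ℝ} (ha : a ∈ Ioo 0 π) :
    ∫ φ in a..π, g φ = levyTail α a := by
  have hderiv : ∀ x ∈ Ioo a π, HasDerivAt (-levyTail α) (g x) x := fun x hx => by
    simpa [hg x ⟨ha.1.trans hx.1, hx.2⟩] using
      (hasDerivAt_levyTail hα ⟨ha.1.trans hx.1, hx.2⟩).neg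
  have hcont : ContinuousOn (-levyTail α) (Icc a π) := (continuousOn_levyTail hα ha.1).neg
  have hint : IntervalIntegrable g volume a π :=
    (intervalIntegrable_iff_integrableOn_Ioc_of_le ha.2.le).2 <|
      intervalIntegral.integrableOn_deriv_of_nonneg hcont hderiv fun x hx =>
        (hg x ⟨ha.1.trans hx.1, hx.2⟩).symm ▸ windingDensity_nonneg α x
  rw [intervalIntegral.integral_eq_sub_of_hasDerivAt_of_le ha.2.le hcont hderiv hint,
    Pi.neg_apply, Pi.neg_apply, levyTail_pi hα.ne']
  ring

end Winding

theorem tendsto_neg_cos_div_sin_nhdsGT_zero :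
    Tendsto (fun a => -(cos a / sin a)) (𝓝[>] 0) atBot := by
  have hsin : Tendsto sin (𝓝[>] 0) (𝓝[>] 0) := by
    refine tendsto_nhdsWithin_of_tendsto_nhds_of_eventually_within _ ?_ ?_
    · simpa using (continuous_sin.tendsto 0).mono_left (nhdsWithin_le_nhds (s := Ioi 0))
    · filter_upwards [Ioo_mem_nhdsGT pi_pos] with a ha using sin_pos_of_pos_of_lt_pi ha.1 ha.2
  have hcos : Tendsto cos (𝓝[>] 0) (𝓝 1) := by
    simpa using (continuous_cos.tendsto 0).mono_left (nhdsWithin_le_nhds (s := Ioi 0))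
  exact tendsto_neg_atTop_atBot.comp
    (hcos.pos_mul_atTop one_pos (tendsto_inv_nhdsGT_zero.comp hsin))

theorem tendsto_rpow_mul_levyTail {α : ℝ} (hα : 0 < α) :
    Tendsto (fun a => a ^ α * levyTail α a) (𝓝[>] 0)
      (𝓝 ((∫ v : ℝ, (1 + v ^ 2) ^ (-(1 + α / 2))) / α)) := by
  have hsinc : Tendsto (fun a => sinc a ^ (-α)) (𝓝[>] 0) (𝓝 1) := by
    have := (continuous_sinc.continuousAt (x := 0).rpow_const (p := -α) (Or.inl (by simp))
      ).tendsto.mono_left (nhdsWithin_le_nhds (s := Ioi 0))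
    rwa [sinc_zero, one_rpow] at this
  have htail := (tendsto_tailOneAddSq_atBot (p := 1 + α / 2) (by linarith)).comp
    tendsto_neg_cos_div_sin_nhdsGT_zero
  have := (hsinc.mul htail).div_const α
  rw [one_mul] at this
  refine this.congr' ?_
  filter_upwards [Ioo_mem_nhdsGT pi_pos] with a ha
  have hsin : 0 < sin a := sin_pos_of_pos_of_lt_pi ha.1 ha.2
  rw [Function.comp_apply, levyTail, sinc_of_ne_zero ha.1.ne', div_rpow hsin.le ha.1.le,
    rpow_neg ha.1.le]
  field_simp

theorem stmt4_general (α : ℝ) (hα : 0 < α)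
    (g : ℝ → ℝ)
    (hg : ∀ φ ∈ Set.Ioo (0 : ℝ) π,
      g φ = ∫ r in Set.Ioi (0 : ℝ), r * (1 + r ^ 2 - 2 * r * Real.cos φ) ^ (-(1 + α / 2))) :
    Filter.Tendsto (fun a : ℝ => a ^ α * ∫ φ in a..π, g φ)
      (nhdsWithin 0 (Set.Ioi 0))
      (nhds (Real.sqrt π * Real.Gamma ((1 + α) / 2) / (α * Real.Gamma (1 + α / 2)))) := by
  have hlim := tendsto_rpow_mul_levyTail hα
  rw [integral_one_add_sq_rpow_neg (by linarith), show 1 + α / 2 - 1 / 2 = (1 + α) / 2 by ring,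
    div_div, mul_comm (Gamma _)] at hlim
  refine hlim.congr' ?_
  filter_upwards [Ioo_mem_nhdsGT pi_pos] with a ha
  rw [integral_eq_levyTail hα hg ha]

/-- For `0 < α < 2`, with `g φ = ∫₀^∞ r (1 + r² - 2r cos φ)^(-(1+α/2)) dr`,
`lim_{a → 0⁺} a^α ∫_a^π g(φ) dφ = √π Γ((1+α)/2) / (α Γ(1+α/2))`. -/
theorem stmt4 (α : ℝ) (hα : 0 < α) (hα2 : α < 2)
    (g : ℝ → ℝ)
    (hg : ∀ φ ∈ Set.Ioo (0 : ℝ) π,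
      g φ = ∫ r in Set.Ioi (0 : ℝ), r * (1 + r ^ 2 - 2 * r * Real.cos φ) ^ (-(1 + α / 2))) :
    Filter.Tendsto (fun a : ℝ => a ^ α * ∫ φ in a..π, g φ)
      (nhdsWithin 0 (Set.Ioi 0))
      (nhds (Real.sqrt π * Real.Gamma ((1 + α) / 2) / (α * Real.Gamma (1 + α / 2)))) :=
  stmt4_general α hα g hg
end

section
/- Let α be a real number with 0 < α < 2 and let μ be a Borel probability measure on (0, ∞) such that ∫_{(0,∞)} exp(-λ·s) dμ(s) = exp(-λ^{α/2}) for all real λ ≥ 0. Then ∫_{(0,∞)} ( ∫_{ℝ²} |x|^{-α} · (4πs)^{-1} · exp(-|x|²/(4s)) dx ) dμ(s) = 2^{-α} · Γ(1 - α/2) / Γ(1 + α/2), where the inner integral is with respect to two-dimensional Lebesgue measure and Γ denotes the Gamma function. -/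
/-!
In polar coordinates the inner Gaussian integral equals `2^(-α) Γ(1 - α/2) s^(-α/2)`, so the
claim reduces to the negative moment `∫ s^(-β) dμ = 1 / Γ(1 + β)` with `β = α/2`. Writing
`Γ(β) s^(-β) = ∫₀^∞ l^(β-1) e^(-l s) dl` and exchanging the integrals (Tonelli) turns
`Γ(β) ∫ s^(-β) dμ` into `∫₀^∞ l^(β-1) e^(-l^β) dl = 1/β`.
-/

open MeasureTheory Real Set

lemma integral_norm_rpow_mul_exp_neg_mul_sq_fin_two {α c : ℝ} (hα : α < 2) (hc : 0 < c) :
    ∫ x : EuclideanSpace ℝ (Fin 2), ‖x‖ ^ (-α) * exp (-c * ‖x‖ ^ 2) =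
      π * c ^ (α / 2 - 1) * Gamma (1 - α / 2) := by
  have hball : volume.real (Metric.ball (0 : EuclideanSpace ℝ (Fin 2)) 1) = π := by
    simp [measureReal_def, pi_pos.le]
  have hradial : ∫ y in Ioi (0 : ℝ), y * (y ^ (-α) * exp (-c * y ^ 2)) =
      ∫ y in Ioi (0 : ℝ), y ^ (1 - α) * exp (-c * y ^ (2 : ℝ)) := by
    refine setIntegral_congr_fun measurableSet_Ioi fun y (hy : 0 < y) => ?_
    rw [sub_eq_add_neg, rpow_add hy, rpow_one, rpow_two, mul_assoc]
  rw [integral_fun_norm_addHaar volume fun y => y ^ (-α) * exp (-c * y ^ 2), hball]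
  simp only [finrank_euclideanSpace_fin, nsmul_eq_mul, smul_eq_mul, Nat.add_one_sub_one, pow_one,
    hradial, integral_rpow_mul_exp_neg_mul_rpow two_pos (by linarith : -1 < 1 - α) hc]
  rw [show -(1 - α + 1) / 2 = α / 2 - 1 by ring, show (1 - α + 1) / 2 = 1 - α / 2 by ring]
  push_cast
  ring

lemma integral_norm_rpow_mul_heatKernel_fin_two {α s : ℝ} (hα : α < 2) (hs : 0 < s) :
    ∫ x : EuclideanSpace ℝ (Fin 2),
        ‖x‖ ^ (-α) * ((4 * π * s)⁻¹ * exp (-‖x‖ ^ 2 / (4 * s))) =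
      2 ^ (-α) * Gamma (1 - α / 2) * s ^ (-(α / 2)) := by
  have h4s : 0 < 4 * s := by positivity
  have hkernel : ∀ x : EuclideanSpace ℝ (Fin 2),
      ‖x‖ ^ (-α) * ((4 * π * s)⁻¹ * exp (-‖x‖ ^ 2 / (4 * s))) =
        (4 * π * s)⁻¹ * (‖x‖ ^ (-α) * exp (-(4 * s)⁻¹ * ‖x‖ ^ 2)) := fun x => by
    ring_nf
  have hpow : ((4 * s)⁻¹) ^ (α / 2 - 1) = 4 * s * (2 ^ (-α) * s ^ (-(α / 2))) := by
    rw [inv_rpow h4s.le, ← rpow_neg h4s.le, neg_sub, sub_eq_add_neg, rpow_add h4s, rpow_one,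
      mul_rpow (by norm_num) hs.le, show (4 : ℝ) = 2 ^ (2 : ℝ) by norm_num, ← rpow_mul two_pos.le]
    ring_nf
  simp_rw [hkernel]
  rw [integral_const_mul, integral_norm_rpow_mul_exp_neg_mul_sq_fin_two hα (inv_pos.2 h4s),
    hpow]
  field_simp

lemma lintegral_rpow_mul_exp_neg_mul_Ioi {β s : ℝ} (hβ : 0 < β) (hs : 0 < s) :
    ∫⁻ l in Ioi (0 : ℝ), ENNReal.ofReal (l ^ (β - 1)) * ENNReal.ofReal (exp (-(l * s))) =
      ENNReal.ofReal (Gamma β * s ^ (-β)) := by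
  have hint : IntegrableOn (fun l : ℝ => l ^ (β - 1) * exp (-s * l ^ (1 : ℝ))) (Ioi 0) :=
    integrableOn_rpow_mul_exp_neg_mul_rpow (by linarith) one_pos hs
  have hval := integral_rpow_mul_exp_neg_mul_Ioi hβ hs
  rw [one_div, inv_rpow hs.le, ← rpow_neg hs.le, mul_comm] at hval
  rw [← hval, ofReal_integral_eq_lintegral_ofReal]
  · refine setLIntegral_congr_fun measurableSet_Ioi fun l (hl : 0 < l) => ?_
    rw [← ENNReal.ofReal_mul (by positivity), mul_comm l s]
  · refine hint.congr_fun (fun l _ => ?_) measurableSet_Ioi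
    simp only [rpow_one, neg_mul, mul_comm s]
  · filter_upwards [ae_restrict_mem measurableSet_Ioi] with l (hl : 0 < l)
    positivity

lemma Gamma_mul_lintegral_rpow_neg_eq_lintegral_laplace (μ : Measure ℝ) [SFinite μ] {β : ℝ}
    (hβ : 0 < β) :
    ENNReal.ofReal (Gamma β) * ∫⁻ s in Ioi (0 : ℝ), ENNReal.ofReal (s ^ (-β)) ∂μ =
      ∫⁻ l in Ioi (0 : ℝ), ENNReal.ofReal (l ^ (β - 1)) *
        ∫⁻ s in Ioi (0 : ℝ), ENNReal.ofReal (exp (-(l * s))) ∂μ := by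
  have hmeas : Measurable fun p : ℝ × ℝ =>
      ENNReal.ofReal (p.2 ^ (β - 1)) * ENNReal.ofReal (exp (-(p.2 * p.1))) := by
    fun_prop
  calc ENNReal.ofReal (Gamma β) * ∫⁻ s in Ioi (0 : ℝ), ENNReal.ofReal (s ^ (-β)) ∂μ
      = ∫⁻ s in Ioi (0 : ℝ), ENNReal.ofReal (Gamma β * s ^ (-β)) ∂μ := by
        rw [← lintegral_const_mul _ (by fun_prop)]
        simp_rw [ENNReal.ofReal_mul (Gamma_pos_of_pos hβ).le]
    _ = ∫⁻ s in Ioi (0 : ℝ), (∫⁻ l in Ioi (0 : ℝ),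
          ENNReal.ofReal (l ^ (β - 1)) * ENNReal.ofReal (exp (-(l * s)))) ∂μ := by
        refine setLIntegral_congr_fun measurableSet_Ioi fun s (hs : 0 < s) => ?_
        rw [lintegral_rpow_mul_exp_neg_mul_Ioi hβ hs]
    _ = ∫⁻ l in Ioi (0 : ℝ), ∫⁻ s in Ioi (0 : ℝ),
          ENNReal.ofReal (l ^ (β - 1)) * ENNReal.ofReal (exp (-(l * s))) ∂μ :=
        lintegral_lintegral_swap hmeas.aemeasurable
    _ = _ := by
        refine lintegral_congr fun l => lintegral_const_mul _ ?_
        exact (by fun_prop : Measurable fun s => ENNReal.ofReal (exp (-(l * s))))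

lemma lintegral_rpow_sub_one_mul_exp_neg_rpow_Ioi {β : ℝ} (hβ : 0 < β) :
    ∫⁻ l in Ioi (0 : ℝ), ENNReal.ofReal (l ^ (β - 1)) * ENNReal.ofReal (exp (-(l ^ β))) =
      ENNReal.ofReal (1 / β) := by
  have hval := integral_rpow_mul_exp_neg_rpow hβ (by linarith : -1 < β - 1)
  rw [sub_add_cancel, div_self hβ.ne', Gamma_one, mul_one] at hval
  rw [← hval, ofReal_integral_eq_lintegral_ofReal
    (integrableOn_rpow_mul_exp_neg_rpow (by linarith) hβ)]
  · refine setLIntegral_congr_fun measurableSet_Ioi fun l (hl : 0 < l) => ?_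
    rw [← ENNReal.ofReal_mul (by positivity)]
  · filter_upwards [ae_restrict_mem measurableSet_Ioi] with l (hl : 0 < l)
    positivity

theorem integral_rpow_neg_of_laplace_eq_exp_neg_rpow (μ : Measure ℝ) [IsFiniteMeasure μ]
    {β : ℝ} (hβ : 0 < β)
    (hLap : ∀ l : ℝ, 0 ≤ l → ∫ s in Ioi (0 : ℝ), exp (-(l * s)) ∂μ = exp (-(l ^ β))) :
    ∫ s in Ioi (0 : ℝ), s ^ (-β) ∂μ = 1 / Gamma (β + 1) := by
  have hΓ : 0 < Gamma β := Gamma_pos_of_pos hβ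
  have hLap_lintegral : ∀ l : ℝ, 0 ≤ l →
      ∫⁻ s in Ioi (0 : ℝ), ENNReal.ofReal (exp (-(l * s))) ∂μ =
        ENNReal.ofReal (exp (-(l ^ β))) := by
    intro l hl
    rw [← hLap l hl, ofReal_integral_eq_lintegral_ofReal]
    · refine Integrable.mono' (integrable_const 1) (by fun_prop) ?_
      filter_upwards [ae_restrict_mem measurableSet_Ioi] with s (hs : 0 < s)
      rw [norm_of_nonneg (exp_pos _).le, exp_le_one_iff, neg_nonpos]
      positivity
    · exact ae_of_all _ fun s => (exp_pos _).le
  have hlint : ∫⁻ s in Ioi (0 : ℝ), ENNReal.ofReal (s ^ (-β)) ∂μ =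
      ENNReal.ofReal (1 / Gamma (β + 1)) := by
    have hlaplace : ∫⁻ l in Ioi (0 : ℝ), ENNReal.ofReal (l ^ (β - 1)) *
          ∫⁻ s in Ioi (0 : ℝ), ENNReal.ofReal (exp (-(l * s))) ∂μ = ENNReal.ofReal (1 / β) := by
      rw [← lintegral_rpow_sub_one_mul_exp_neg_rpow_Ioi hβ]
      exact setLIntegral_congr_fun measurableSet_Ioi fun l (hl : 0 < l) => by
        rw [hLap_lintegral l hl.le]
    have h := Gamma_mul_lintegral_rpow_neg_eq_lintegral_laplace μ hβ
    rw [Gamma_add_one hβ.ne']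
    rw [hlaplace, show 1 / β = Gamma β * (1 / (β * Gamma β)) by field_simp,
      ENNReal.ofReal_mul hΓ.le] at h
    exact (ENNReal.mul_right_inj (by positivity) ENNReal.ofReal_ne_top).1 h
  rw [integral_eq_lintegral_of_nonneg_ae, hlint, ENNReal.toReal_ofReal (by positivity)]
  · filter_upwards [ae_restrict_mem measurableSet_Ioi] with s (hs : 0 < s)
    positivity
  · fun_prop

theorem stmt7_general (α : ℝ) (hα : 0 < α) (hα2 : α < 2)
    (μ : Measure ℝ) [IsProbabilityMeasure μ]
    (hLap : ∀ l : ℝ, 0 ≤ l →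
      ∫ s in Set.Ioi (0 : ℝ), Real.exp (-(l * s)) ∂μ = Real.exp (-(l ^ (α / 2)))) :
    ∫ s in Set.Ioi (0 : ℝ),
        (∫ x : EuclideanSpace ℝ (Fin 2),
          ‖x‖ ^ (-α) * ((4 * π * s)⁻¹ * Real.exp (-‖x‖ ^ 2 / (4 * s)))) ∂μ =
      2 ^ (-α) * Real.Gamma (1 - α / 2) / Real.Gamma (1 + α / 2) := by
  calc _ = ∫ s in Ioi (0 : ℝ), 2 ^ (-α) * Gamma (1 - α / 2) * s ^ (-(α / 2)) ∂μ :=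
        setIntegral_congr_fun measurableSet_Ioi fun s hs =>
          integral_norm_rpow_mul_heatKernel_fin_two hα2 hs
    _ = 2 ^ (-α) * Gamma (1 - α / 2) * (1 / Gamma (α / 2 + 1)) := by
        rw [integral_const_mul,
          integral_rpow_neg_of_laplace_eq_exp_neg_rpow μ (half_pos hα) hLap]
    _ = _ := by rw [add_comm]; ring

/-- If `μ` is a Borel probability measure on `(0,∞)` with Laplace transform
`λ ↦ exp(-λ^(α/2))`, `0 < α < 2`, then
`∫_{(0,∞)} (∫_{ℝ²} |x|^(-α) (4πs)^(-1) exp(-|x|²/(4s)) dx) dμ(s)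
  = 2^(-α) Γ(1-α/2) / Γ(1+α/2)`. -/
theorem stmt7 (α : ℝ) (hα : 0 < α) (hα2 : α < 2)
    (μ : Measure ℝ) [IsProbabilityMeasure μ] (hsupp : μ (Set.Iic 0) = 0)
    (hLap : ∀ l : ℝ, 0 ≤ l →
      ∫ s in Set.Ioi (0 : ℝ), Real.exp (-(l * s)) ∂μ = Real.exp (-(l ^ (α / 2)))) :
    ∫ s in Set.Ioi (0 : ℝ),
        (∫ x : EuclideanSpace ℝ (Fin 2),
          ‖x‖ ^ (-α) * ((4 * π * s)⁻¹ * Real.exp (-‖x‖ ^ 2 / (4 * s)))) ∂μ =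
      2 ^ (-α) * Real.Gamma (1 - α / 2) / Real.Gamma (1 + α / 2) :=
  stmt7_general α hα hα2 μ hLap
end
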